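/- Under the stated assumptions on L, F, g, the KL assumption, the restricted injectivity assumption on B̄(θ₀, R), and the initialization condition, the gradient flow has a unique strong global solution: there exists exactly one continuously differentiable function θ : [0,∞) → ℝ^p with θ(0) = θ₀ and θ'(t) = −∇f(θ(t)) for all t ≥ 0. -/

import Mathlib

open Filter MeasureTheory ProbabilityTheory
open scoped Topology NNReal

noncomputable def sigmaMin {E F : Type*} [NormedAddCommGroup E] [InnerProductSpace ℝ E]
    [CompleteSpace E] [NormedAddCommGroup F] [InnerProductSpace ℝ F] [CompleteSpace F]
    (A : E →L[ℝ] F) : ℝ :=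
  ⨅ w : {w : F // ‖w‖ = 1}, ‖ContinuousLinearMap.adjoint A w.1‖

/-!
Write `f = L ∘ F ∘ g`, so that `∇f = J_g* J_F* ∇L`. Each factor is locally Lipschitz, hence so
is `∇f`, and this gives uniqueness. For existence, compose `-∇f` with the radial retraction onto
`B̄(θ₀, R)`: the resulting field is globally Lipschitz and bounded, so it has a global integral
curve `θ`. On `B̄(θ₀, R)` the Lipschitz bound on `J_g` keeps `J_g*` bounded below by `σ₀ / 2`, so
`f` satisfies the KL inequality with desingularising function `c ψ`, `c = 2 / (σ_F σ₀)`. Along the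
flow this gives `‖θ'‖ ≤ -(c ψ ∘ f ∘ θ)'`, so as long as `θ` stays in the ball its distance to `θ₀`
is at most `c ψ(L₀) = R' < R`; by continuous induction it never leaves `B̄(θ₀, R')`, where it
solves the true gradient flow.
-/

open Metric Set

section RadialRetraction

variable {E : Type*} [NormedAddCommGroup E] [NormedSpace ℝ E]

lemma abs_min_one_div_sub_mul_le {R a b : ℝ} (hR : 0 ≤ R) (hb : 0 ≤ b) (hba : b ≤ a) :
    |min 1 (R / b) - min 1 (R / a)| * b ≤ a - b := by
  rcases hb.eq_or_lt with rfl | hb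
  · simpa using hba
  have ha : 0 < a := hb.trans_le hba
  have hdiv : R / a ≤ R / b := div_le_div_of_nonneg_left hR hb hba
  rw [abs_of_nonneg (sub_nonneg.2 (min_le_min_left 1 hdiv))]
  rcases le_total a R with haR | hRa
  · rw [min_eq_left ((one_le_div ha).2 haR), min_eq_left ((one_le_div hb).2 (hba.trans haR))]
    linarith
  rw [min_eq_right ((div_le_one ha).2 hRa)]
  rcases le_total b R with hbR | hRb
  · rw [min_eq_left ((one_le_div hb).2 hbR),
      show (1 - R / a) * b = (a - R) * b / a by field_simp, div_le_iff₀ ha]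
    nlinarith
  · rw [min_eq_right ((div_le_one hb).2 hRb),
      show (R / b - R / a) * b = R * (a - b) / a by field_simp, div_le_iff₀ ha]
    nlinarith

lemma norm_min_one_div_smul_sub_le {R : ℝ} (hR : 0 ≤ R) {u v : E} (h : ‖v‖ ≤ ‖u‖) :
    ‖min 1 (R / ‖u‖) • u - min 1 (R / ‖v‖) • v‖ ≤ 2 * ‖u - v‖ := by
  set s := min 1 (R / ‖u‖)
  set s' := min 1 (R / ‖v‖)
  have hs : 0 ≤ s := le_min zero_le_one (by positivity)
  have hs1 : s ≤ 1 := min_le_left _ _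
  calc ‖s • u - s' • v‖ = ‖s • (u - v) - (s' - s) • v‖ := by congr 1; module
    _ ≤ s * ‖u - v‖ + |s' - s| * ‖v‖ := by
        grw [norm_sub_le, norm_smul, norm_smul, Real.norm_of_nonneg hs, Real.norm_eq_abs]
    _ ≤ 1 * ‖u - v‖ + (‖u‖ - ‖v‖) := by
        gcongr
        exact abs_min_one_div_sub_mul_le hR (norm_nonneg v) h
    _ ≤ 2 * ‖u - v‖ := by linarith [norm_sub_norm_le u v]

noncomputable def radialRetraction (c : E) (R : ℝ) (x : E) : E :=
  c + min 1 (R / ‖x - c‖) • (x - c)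

lemma radialRetraction_mem_closedBall (c : E) {R : ℝ} (hR : 0 ≤ R) (x : E) :
    radialRetraction c R x ∈ closedBall c R := by
  rw [mem_closedBall, radialRetraction, dist_eq_norm, add_sub_cancel_left, norm_smul,
    Real.norm_of_nonneg (le_min zero_le_one (by positivity))]
  rcases eq_or_ne ‖x - c‖ 0 with h | h
  · simpa [h] using hR
  calc min 1 (R / ‖x - c‖) * ‖x - c‖ ≤ R / ‖x - c‖ * ‖x - c‖ := by gcongr; exact min_le_right _ _
    _ = R := div_mul_cancel₀ R h

lemma radialRetraction_eq_self {c x : E} {R : ℝ} (hx : x ∈ closedBall c R) :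
    radialRetraction c R x = x := by
  rw [mem_closedBall, dist_eq_norm] at hx
  rcases eq_or_ne ‖x - c‖ 0 with h | h
  · rw [norm_eq_zero, sub_eq_zero] at h
    simp [radialRetraction, h]
  rw [radialRetraction, min_eq_left ((one_le_div (lt_of_le_of_ne (norm_nonneg _) h.symm)).2 hx),
    one_smul, add_sub_cancel]

lemma lipschitzWith_radialRetraction (c : E) {R : ℝ} (hR : 0 ≤ R) :
    LipschitzWith 2 (radialRetraction c R) := by
  refine LipschitzWith.of_dist_le_mul fun x y ↦ ?_
  rw [dist_eq_norm, dist_eq_norm, radialRetraction, radialRetraction, add_sub_add_left_eq_sub,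
    show x - y = (x - c) - (y - c) by abel, NNReal.coe_ofNat]
  rcases le_total ‖y - c‖ ‖x - c‖ with h | h
  · exact norm_min_one_div_smul_sub_le hR h
  · rw [norm_sub_rev, norm_sub_rev (x - c)]
    exact norm_min_one_div_smul_sub_le hR h

end RadialRetraction

section LocallyLipschitz

lemma locallyLipschitz_of_forall_isBounded {α β : Type*} [PseudoMetricSpace α]
    [PseudoMetricSpace β] {f : α → β}
    (hf : ∀ s, Bornology.IsBounded s → ∃ K, LipschitzOnWith K f s) : LocallyLipschitz f := by
  intro x
  obtain ⟨K, hK⟩ := hf (ball x 1) isBounded_ball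
  exact ⟨K, ball x 1, ball_mem_nhds x one_pos, hK⟩

lemma LocallyLipschitz.clm_apply {α E F : Type*} [PseudoMetricSpace α] [NormedAddCommGroup E]
    [NormedSpace ℝ E] [NormedAddCommGroup F] [NormedSpace ℝ F] {A : α → E →L[ℝ] F}
    {u : α → E} (hA : LocallyLipschitz A) (hu : LocallyLipschitz u) :
    LocallyLipschitz fun x ↦ A x (u x) := by
  have happly : LocallyLipschitz fun p : (E →L[ℝ] F) × E ↦ p.1 p.2 :=
    isBoundedBilinearMap_apply.contDiff.locallyLipschitz
  exact happly.comp (hA.prodMk hu)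

end LocallyLipschitz

section Flow

variable {E : Type*} [NormedAddCommGroup E] [NormedSpace ℝ E]

theorem LipschitzWith.exists_isIntegralCurve_of_norm_le [CompleteSpace E] {W : E → E} {K : ℝ≥0}
    (hW : LipschitzWith K W) {M : ℝ} (hM : ∀ x, ‖W x‖ ≤ M) (x₀ : E) :
    ∃ γ : ℝ → E, γ 0 = x₀ ∧ IsIntegralCurve γ fun _ ↦ W := by
  have hM₀ : 0 ≤ M := (norm_nonneg _).trans (hM x₀)
  have local_sol (N : ℕ) : ∃ γ : ℝ → E, γ 0 = x₀ ∧
      ∀ t ∈ Ioo (-(N + 1 : ℝ)) (N + 1), HasDerivAt γ (W (γ t)) t := by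
    have hpl : IsPicardLindelof (fun _ ↦ W) (tmin := -(N + 1 : ℝ)) (tmax := N + 1)
        ⟨0, by constructor <;> linarith⟩ x₀ (M.toNNReal * (N + 1)) 0 M.toNNReal K :=
      .of_time_independent (fun x _ ↦ (hM x).trans (Real.le_coe_toNNReal M))
        hW.lipschitzOnWith (by simp [Real.coe_toNNReal _ hM₀])
    obtain ⟨γ, hγ0, hγ⟩ := hpl.exists_eq_forall_mem_Icc_hasDerivWithinAt₀
    exact ⟨γ, hγ0, fun t ht ↦
      (hγ t (Ioo_subset_Icc_self ht)).hasDerivAt (Icc_mem_nhds ht.1 ht.2)⟩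
  choose γ hγ0 hγ using local_sol
  have coherent (N N' : ℕ) (t : ℝ) (hN : |t| < N + 1) (hN' : |t| < N' + 1) :
      γ N t = γ N' t := by
    set c : ℝ := min (N : ℝ) N' + 1 with hc_def
    have hc : 0 < c := by positivity
    have hsub (n : ℕ) (hn : (n : ℝ) + 1 ≥ c) : Ioo (-c) c ⊆ Ioo (-(n + 1 : ℝ)) (n + 1) :=
      Ioo_subset_Ioo (by linarith) hn
    have hN₁ := hsub N (by simp [c])
    have hN₂ := hsub N' (by simp [c])
    refine ODE_solution_unique_of_mem_Ioo (v := fun _ ↦ W) (s := fun _ ↦ univ)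
      (fun _ _ ↦ hW.lipschitzOnWith) (t₀ := 0) ⟨neg_lt_zero.2 hc, hc⟩
      (fun t ht ↦ ⟨hγ N t (hN₁ ht), mem_univ _⟩) (fun t ht ↦ ⟨hγ N' t (hN₂ ht), mem_univ _⟩)
      ((hγ0 N).trans (hγ0 N').symm) ?_
    rw [mem_Ioo, ← abs_lt, hc_def, ← min_add_add_right]
    exact lt_min hN hN'
  refine ⟨fun t ↦ γ ⌊|t|⌋₊ t, by simpa using hγ0 0, fun t ↦ ?_⟩
  have ht : |t| < ⌊|t|⌋₊ + 1 := Nat.lt_floor_add_one _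
  have hev : (fun s ↦ γ ⌊|s|⌋₊ s) =ᶠ[𝓝 t] γ ⌊|t|⌋₊ := by
    filter_upwards [(isOpen_lt continuous_abs continuous_const).mem_nhds ht] with s hs
    exact coherent _ _ s (Nat.lt_floor_add_one _) hs
  exact (hγ _ t (abs_lt.1 ht)).congr_of_eventuallyEq hev

theorem ODE_solution_unique_Ici_of_locallyLipschitz {v : E → E} (hv : LocallyLipschitz v)
    {γ₁ γ₂ : ℝ → E} (h₁ : ∀ t ≥ 0, HasDerivAt γ₁ (v (γ₁ t)) t)
    (h₂ : ∀ t ≥ 0, HasDerivAt γ₂ (v (γ₂ t)) t) (h₀ : γ₁ 0 = γ₂ 0) :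
    EqOn γ₁ γ₂ (Ici 0) := by
  intro T hT
  have hcont₁ : ContinuousOn γ₁ (Icc 0 T) := fun t ht ↦ (h₁ t ht.1).continuousAt.continuousWithinAt
  have hcont₂ : ContinuousOn γ₂ (Icc 0 T) := fun t ht ↦ (h₂ t ht.1).continuousAt.continuousWithinAt
  set S := γ₁ '' Icc 0 T ∪ γ₂ '' Icc 0 T
  obtain ⟨K, hK⟩ := hv.locallyLipschitzOn.exists_lipschitzOnWith_of_compact
    (s := S) ((isCompact_Icc.image_of_continuousOn hcont₁).union
      (isCompact_Icc.image_of_continuousOn hcont₂))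
  refine ODE_solution_unique_of_mem_Icc_right (v := fun _ ↦ v) (s := fun _ ↦ S)
    (fun _ _ ↦ hK) hcont₁ (fun t ht ↦ (h₁ t ht.1).hasDerivWithinAt)
    (fun t ht ↦ .inl ⟨t, Ico_subset_Icc_self ht, rfl⟩) hcont₂
    (fun t ht ↦ (h₂ t ht.1).hasDerivWithinAt) (fun t ht ↦ .inr ⟨t, Ico_subset_Icc_self ht, rfl⟩)
    h₀ ⟨hT, le_rfl⟩

end Flow

theorem mapsTo_Ici_closedBall_of_forall_mapsTo_Icc {X : Type*} [PseudoMetricSpace X]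
    {γ : ℝ → X} (hγ : Continuous γ) {x₀ : X} {r R : ℝ} (hrR : r < R)
    (h₀ : γ 0 ∈ closedBall x₀ r)
    (hstep : ∀ T ≥ 0, MapsTo γ (Icc 0 T) (closedBall x₀ R) → γ T ∈ closedBall x₀ r) :
    MapsTo γ (Ici 0) (closedBall x₀ r) := by
  intro T hT
  have hclosed : IsClosed (γ ⁻¹' closedBall x₀ r ∩ Icc 0 T) :=
    (isClosed_closedBall.preimage hγ).inter isClosed_Icc
  refine hclosed.Icc_subset_of_forall_mem_nhdsGT_of_Icc_subset h₀ (fun t ht hsub ↦ ?_) ⟨hT, le_rfl⟩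
  have hball : γ t ∈ ball x₀ R := closedBall_subset_ball hrR (hsub ⟨ht.1, le_rfl⟩)
  obtain ⟨ε, hε, hnear⟩ := Metric.eventually_nhds_iff.1
    (hγ.continuousAt.eventually (isOpen_ball.mem_nhds hball))
  filter_upwards [Ioo_mem_nhdsGT (show t < t + ε by linarith)] with u hu
  refine hstep u (ht.1.trans hu.1.le) fun w hw ↦ ball_subset_closedBall ?_
  rcases le_or_gt w t with hwt | hwt
  · exact closedBall_subset_ball hrR (hsub ⟨hw.1, hwt⟩)
  · exact hnear (by rw [Real.dist_eq, abs_lt]; constructor <;> linarith [hw.2, hu.2])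

section Adjoint

variable {E F G : Type*} [NormedAddCommGroup E] [InnerProductSpace ℝ E] [CompleteSpace E]
  [NormedAddCommGroup F] [InnerProductSpace ℝ F] [CompleteSpace F]
  [NormedAddCommGroup G] [InnerProductSpace ℝ G] [CompleteSpace G]

open ContinuousLinearMap

lemma sigmaMin_mul_norm_le (A : E →L[ℝ] F) (w : F) :
    sigmaMin A * ‖w‖ ≤ ‖adjoint A w‖ := by
  rcases eq_or_ne w 0 with rfl | hw
  · simp
  have hw' : ‖w‖ ≠ 0 := norm_ne_zero_iff.2 hw
  have hunit : ‖‖w‖⁻¹ • w‖ = 1 := by rw [norm_smul, norm_inv, norm_norm, inv_mul_cancel₀ hw']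
  have hle : sigmaMin A ≤ ‖adjoint A (‖w‖⁻¹ • w)‖ :=
    ciInf_le ⟨0, by rintro _ ⟨v, rfl⟩; positivity⟩ (⟨_, hunit⟩ : {w : F // ‖w‖ = 1})
  rwa [map_smul, norm_smul, norm_inv, norm_norm, ← div_eq_inv_mul, le_div_iff₀
    (norm_pos_iff.2 hw)] at hle

lemma sub_mul_norm_le_norm_adjoint_apply {A B : E →L[ℝ] F} {σ δ : ℝ}
    (hA : ∀ w, σ * ‖w‖ ≤ ‖adjoint A w‖) (hAB : ‖B - A‖ ≤ δ) (w : F) :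
    (σ - δ) * ‖w‖ ≤ ‖adjoint B w‖ := by
  have : ‖adjoint A w - adjoint B w‖ ≤ δ * ‖w‖ := by
    rw [← sub_apply, ← map_sub]
    calc ‖adjoint (A - B) w‖ ≤ ‖A - B‖ * ‖w‖ := by
          grw [le_opNorm, LinearIsometryEquiv.norm_map]
      _ ≤ δ * ‖w‖ := by rw [norm_sub_rev]; gcongr
  linarith [hA w, norm_sub_norm_le (adjoint A w) (adjoint B w)]

lemma half_mul_norm_le_norm_adjoint_apply {X : Type*} [SeminormedAddCommGroup X]
    {J : X → E →L[ℝ] F} {x₀ x : X} {σ R : ℝ} (hσ : 0 ≤ σ) (hR : 0 < R)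
    (hJ₀ : ∀ w, σ * ‖w‖ ≤ ‖adjoint (J x₀) w‖)
    (hJ : ∀ a ∈ closedBall x₀ R, ∀ b ∈ closedBall x₀ R, ‖J a - J b‖ ≤ σ / (2 * R) * ‖a - b‖)
    (hx : x ∈ closedBall x₀ R) (w : F) :
    σ / 2 * ‖w‖ ≤ ‖adjoint (J x) w‖ := by
  rw [show σ / 2 = σ - σ / 2 by ring]
  refine sub_mul_norm_le_norm_adjoint_apply hJ₀ ?_ w
  calc ‖J x - J x₀‖ ≤ σ / (2 * R) * ‖x - x₀‖ := hJ x hx x₀ (mem_closedBall_self hR.le)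
    _ ≤ σ / (2 * R) * R := by gcongr; rwa [← dist_eq_norm]
    _ = σ / 2 := by field_simp

lemma gradient_comp {φ : F → ℝ} {g : E → F} {x : E} (hφ : DifferentiableAt ℝ φ (g x))
    (hg : DifferentiableAt ℝ g x) :
    gradient (fun y ↦ φ (g y)) x = adjoint (fderiv ℝ g x) (gradient φ (g x)) := by
  refine ext_inner_right ℝ fun v ↦ ?_
  rw [inner_gradient_left, adjoint_inner_left, inner_gradient_left, fderiv_fun_comp x hφ hg]
  rfl

lemma mul_mul_norm_gradient_le_norm_gradient_comp_comp {φ : G → ℝ} {u : F → G} {g : E → F}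
    {x : E} (hφ : DifferentiableAt ℝ φ (u (g x))) (hu : DifferentiableAt ℝ u (g x))
    (hg : DifferentiableAt ℝ g x) {a b : ℝ} (ha : 0 ≤ a)
    (hg' : ∀ w, a * ‖w‖ ≤ ‖adjoint (fderiv ℝ g x) w‖)
    (hu' : b * ‖gradient φ (u (g x))‖ ≤ ‖adjoint (fderiv ℝ u (g x)) (gradient φ (u (g x)))‖) :
    a * b * ‖gradient φ (u (g x))‖ ≤ ‖gradient (fun y ↦ φ (u (g y))) x‖ := by
  rw [gradient_comp (φ := fun z ↦ φ (u z)) (hφ.comp (g x) hu) hg, gradient_comp hφ hu, mul_assoc]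
  grw [hu']
  exact hg' _

lemma one_le_mul_norm_gradient_comp_comp {φ : G → ℝ} {u : F → G} {g : E → F} {x : E}
    (hφ : DifferentiableAt ℝ φ (u (g x))) (hu : DifferentiableAt ℝ u (g x))
    (hg : DifferentiableAt ℝ g x) {σ τ κ : ℝ} (hσ : 0 < σ) (hτ : 0 < τ)
    (hg' : ∀ w, σ / 2 * ‖w‖ ≤ ‖adjoint (fderiv ℝ g x) w‖)
    (hu' : τ * ‖gradient φ (u (g x))‖ ≤ ‖adjoint (fderiv ℝ u (g x)) (gradient φ (u (g x)))‖)
    (hκ : 1 ≤ κ * ‖gradient φ (u (g x))‖) :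
    1 ≤ 2 / (τ * σ) * κ * ‖gradient (fun y ↦ φ (u (g y))) x‖ := by
  have hlow := mul_mul_norm_gradient_le_norm_gradient_comp_comp hφ hu hg (by positivity) hg' hu'
  have hκ₀ : 0 ≤ κ := by
    by_contra! h
    nlinarith [norm_nonneg (gradient φ (u (g x)))]
  calc 1 ≤ κ * ‖gradient φ (u (g x))‖ := hκ
    _ = 2 / (τ * σ) * κ * (σ / 2 * τ * ‖gradient φ (u (g x))‖) := by field_simp
    _ ≤ _ := by gcongr

lemma LocallyLipschitz.gradient_comp {φ : F → ℝ} {g : E → F} (hφ : Differentiable ℝ φ)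
    (hg : ContDiff ℝ 1 g) (hφ' : LocallyLipschitz (gradient φ))
    (hg' : LocallyLipschitz (fderiv ℝ g)) :
    LocallyLipschitz (gradient fun x ↦ φ (g x)) := by
  have : gradient (fun x ↦ φ (g x)) = fun x ↦ adjoint (fderiv ℝ g x) (gradient φ (g x)) :=
    funext fun x ↦ _root_.gradient_comp (hφ (g x)) (hg.differentiable one_ne_zero x)
  rw [this]
  exact ((adjoint (𝕜 := ℝ) (E := E) (F := F)).lipschitz.locallyLipschitz.comp hg').clm_apply
    (hφ'.comp hg.locallyLipschitz)

end Adjoint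

section GradientFlow

variable {E : Type*} [NormedAddCommGroup E] [InnerProductSpace ℝ E] [CompleteSpace E]
  {φ : E → ℝ} {γ : ℝ → E}

lemma gradient_eq_zero_of_nonneg_of_eq_zero (hφ : ∀ x, 0 ≤ φ x) {x : E} (hx : φ x = 0) :
    gradient φ x = 0 := by
  have hmin : IsLocalMin φ x := .of_forall fun y ↦ hx ▸ hφ y
  rw [gradient, hmin.fderiv_eq_zero, map_zero]

lemma HasDerivAt.comp_of_eq_neg_gradient {t : ℝ} (hγ : HasDerivAt γ (-gradient φ (γ t)) t)
    (hφ : DifferentiableAt ℝ φ (γ t)) :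
    HasDerivAt (fun s ↦ φ (γ s)) (-‖gradient φ (γ t)‖ ^ 2) t := by
  have := hφ.hasGradientAt.hasFDerivAt.comp_hasDerivAt t hγ
  rwa [InnerProductSpace.toDual_apply_apply, inner_neg_right, real_inner_self_eq_norm_sq] at this

lemma antitoneOn_comp_of_eq_neg_gradient (hφ : Differentiable ℝ φ) {a b : ℝ}
    (hγ : ∀ t ∈ Icc a b, HasDerivAt γ (-gradient φ (γ t)) t) :
    AntitoneOn (fun t ↦ φ (γ t)) (Icc a b) :=
  antitoneOn_of_hasDerivWithinAt_nonpos (convex_Icc a b)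
    (fun t ht ↦ ((hγ t ht).comp_of_eq_neg_gradient (hφ _)).continuousAt.continuousWithinAt)
    (fun t ht ↦ ((hγ t (interior_subset ht)).comp_of_eq_neg_gradient (hφ _)).hasDerivWithinAt)
    fun _ _ ↦ neg_nonpos.2 (sq_nonneg _)

theorem norm_sub_le_of_kl (hφ : Differentiable ℝ φ) (hφ₀ : ∀ x, 0 ≤ φ x) {T : ℝ} (hT : 0 ≤ T)
    (hγ : ∀ t ∈ Icc 0 T, HasDerivAt γ (-gradient φ (γ t)) t)
    {U : Set E} (hU : MapsTo γ (Icc 0 T) U) {r₀ : ℝ} (hr₀ : φ (γ 0) < r₀) {ψ ψ' : ℝ → ℝ}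
    (hψ : ContinuousOn ψ (Ico 0 r₀)) (hψ' : ∀ s ∈ Ioo 0 r₀, HasDerivAt ψ (ψ' s) s)
    (hKL : ∀ x ∈ U, 0 < φ x → φ x < r₀ → 1 ≤ ψ' (φ x) * ‖gradient φ x‖) :
    ‖γ T - γ 0‖ ≤ ψ (φ (γ 0)) - ψ (φ (γ T)) := by
  set h : ℝ → ℝ := fun s ↦ φ (γ s)
  have hh' (t) (ht : t ∈ Icc 0 T) : HasDerivAt h (-‖gradient φ (γ t)‖ ^ 2) t :=
    (hγ t ht).comp_of_eq_neg_gradient (hφ _)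
  have hcont : ContinuousOn h (Icc 0 T) := fun t ht ↦ (hh' t ht).continuousAt.continuousWithinAt
  have hanti : AntitoneOn h (Icc 0 T) := antitoneOn_comp_of_eq_neg_gradient hφ hγ
  have hlt (t) (ht : t ∈ Icc 0 T) : h t < r₀ := (hanti ⟨le_rfl, hT⟩ ht ht.1).trans_lt hr₀
  refine image_norm_le_of_norm_deriv_right_le_deriv_boundary' (f := fun t ↦ γ t - γ 0)
    (B := fun t ↦ ψ (h 0) - ψ (h t)) (B' := fun t ↦ ψ' (h t) * ‖gradient φ (γ t)‖ ^ 2)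
    (fun t ht ↦ (hγ t ht).continuousAt.continuousWithinAt.sub continuousWithinAt_const)
    (fun t ht ↦ ((hγ t (Ico_subset_Icc_self ht)).sub_const _).hasDerivWithinAt) (by simp)
    (continuousOn_const.sub (hψ.comp hcont fun t ht ↦ ⟨hφ₀ _, hlt t ht⟩)) (fun t ht ↦ ?_)
    (fun t ht ↦ ?_) ⟨hT, le_rfl⟩
  · have htT := Ico_subset_Icc_self ht
    rcases (hφ₀ (γ t)).eq_or_lt with h0 | hpos
    · -- once `φ ∘ γ` vanishes it stays zero, so `B` is constant to the right of `t`
      have hconst : (fun s ↦ ψ (h 0) - ψ (h s)) =ᶠ[𝓝[≥] t] fun _ ↦ ψ (h 0) - ψ 0 := by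
        filter_upwards [Icc_mem_nhdsGE ht.2] with s hs
        have hst : h s ≤ h t := hanti htT ⟨ht.1.trans hs.1, hs.2⟩ hs.1
        rw [show h s = 0 from le_antisymm (hst.trans_eq h0.symm) (hφ₀ _)]
      simpa [gradient_eq_zero_of_nonneg_of_eq_zero hφ₀ h0.symm] using
        (hasDerivWithinAt_const t _ _).congr_of_eventuallyEq hconst (by simp [h, ← h0])
    · have := ((hψ' (h t) ⟨hpos, hlt t htT⟩).comp t (hh' t htT)).const_sub (ψ (h 0))
      simpa only [Function.comp_apply, mul_neg, neg_neg] using this.hasDerivWithinAt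
  · have htT := Ico_subset_Icc_self ht
    rcases (hφ₀ (γ t)).eq_or_lt with h0 | hpos
    · simp [gradient_eq_zero_of_nonneg_of_eq_zero hφ₀ h0.symm]
    · rw [norm_neg, sq, ← mul_assoc]
      exact le_mul_of_one_le_left (norm_nonneg _) (hKL _ (hU htT) hpos (hlt t htT))

end GradientFlow

section KLFlow

variable {E : Type*} [NormedAddCommGroup E] [InnerProductSpace ℝ E] [ProperSpace E]

theorem exists_gradient_flow_of_kl {φ : E → ℝ} (hφ : Differentiable ℝ φ)
    (hφ₀ : ∀ x, 0 ≤ φ x) (hgrad : LocallyLipschitz (gradient φ)) {x₀ : E} {r₀ R : ℝ}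
    {ψ ψ' : ℝ → ℝ} (hr₀ : φ x₀ < r₀) (hψ₀ : ∀ s ∈ Ico 0 r₀, 0 ≤ ψ s)
    (hψ : ContinuousOn ψ (Ico 0 r₀)) (hψ' : ∀ s ∈ Ioo 0 r₀, HasDerivAt ψ (ψ' s) s)
    (hKL : ∀ x ∈ closedBall x₀ R, 0 < φ x → φ x < r₀ → 1 ≤ ψ' (φ x) * ‖gradient φ x‖)
    (hR : ψ (φ x₀) < R) :
    ∃ γ : ℝ → E, γ 0 = x₀ ∧ ∀ t ≥ 0, HasDerivAt γ (-gradient φ (γ t)) t := by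
  have hψx₀ : 0 ≤ ψ (φ x₀) := hψ₀ _ ⟨hφ₀ x₀, hr₀⟩
  have hR₀ : 0 ≤ R := hψx₀.trans hR.le
  obtain ⟨K, hK⟩ := hgrad.locallyLipschitzOn.exists_lipschitzOnWith_of_compact
    (isCompact_closedBall x₀ R)
  obtain ⟨M, hM⟩ := (isCompact_closedBall x₀ R).exists_bound_of_continuousOn
    hgrad.continuous.continuousOn
  set W : E → E := fun x ↦ -gradient φ (radialRetraction x₀ R x)
  have hW : LipschitzWith (K * 2) W := by
    have := hK.comp (lipschitzWith_radialRetraction x₀ hR₀).lipschitzOnWith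
      fun x (_ : x ∈ univ) ↦ radialRetraction_mem_closedBall x₀ hR₀ x
    exact fun x y ↦ by
      simpa only [W, edist_neg_neg, Function.comp_apply] using lipschitzOnWith_univ.1 this x y
  obtain ⟨γ, hγ₀, hγ⟩ := hW.exists_isIntegralCurve_of_norm_le
    (fun x ↦ (norm_neg _).trans_le (hM _ (radialRetraction_mem_closedBall x₀ hR₀ x))) x₀
  have hflow (t : ℝ) (ht : γ t ∈ closedBall x₀ R) : HasDerivAt γ (-gradient φ (γ t)) t := by
    simpa [W, radialRetraction_eq_self ht] using hγ t
  have htrap : MapsTo γ (Ici 0) (closedBall x₀ (ψ (φ x₀))) := by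
    refine mapsTo_Ici_closedBall_of_forall_mapsTo_Icc hγ.continuous hR
      (by simpa [hγ₀] using hψx₀) fun T hT hball ↦ ?_
    have := norm_sub_le_of_kl hφ hφ₀ hT (fun t ht ↦ hflow t (hball ht)) hball
      (hγ₀ ▸ hr₀) hψ hψ' hKL
    rw [hγ₀] at this
    rw [mem_closedBall, dist_eq_norm]
    have hdecr : φ (γ T) ≤ φ (γ 0) := antitoneOn_comp_of_eq_neg_gradient hφ
      (fun t ht ↦ hflow t (hball ht)) ⟨le_rfl, hT⟩ ⟨hT, le_rfl⟩ hT
    linarith [hψ₀ (φ (γ T)) ⟨hφ₀ _, (hγ₀ ▸ hdecr).trans_lt hr₀⟩]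
  exact ⟨γ, hγ₀, fun t ht ↦ hflow t (closedBall_subset_closedBall hR.le (htrap ht))⟩

end KLFlow

theorem stmt11_general
    {n m p : ℕ}
    (L : EuclideanSpace ℝ (Fin m) → ℝ)
    (F : EuclideanSpace ℝ (Fin n) → EuclideanSpace ℝ (Fin m))
    (g : EuclideanSpace ℝ (Fin p) → EuclideanSpace ℝ (Fin n))
    (hL : ContDiff ℝ 1 L)
    (hLnonneg : ∀ v, 0 ≤ L v)
    (hLgrad : ∀ s : Set (EuclideanSpace ℝ (Fin m)), Bornology.IsBounded s →
      ∃ K : ℝ≥0, LipschitzOnWith K (fun v => gradient L v) s)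
    (hF : ContDiff ℝ 1 F)
    (hJF : ∀ s : Set (EuclideanSpace ℝ (Fin n)), Bornology.IsBounded s →
      ∃ K : ℝ≥0, LipschitzOnWith K (fun x => fderiv ℝ F x) s)
    (hg : ContDiff ℝ 1 g)
    (hJg : ∀ s : Set (EuclideanSpace ℝ (Fin p)), Bornology.IsBounded s →
      ∃ K : ℝ≥0, LipschitzOnWith K (fun q => fderiv ℝ g q) s)
    (θ₀ : EuclideanSpace ℝ (Fin p))
    (r₀ : ℝ) (hr₀ : L (F (g θ₀)) < r₀)
    (ψ ψ' : ℝ → ℝ) (hψ0 : ψ 0 = 0)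
    (hψcont : ContinuousOn ψ (Set.Ico 0 r₀))
    (hψmono : StrictMonoOn ψ (Set.Ico 0 r₀))
    (hψd : ∀ s ∈ Set.Ioo (0:ℝ) r₀, HasDerivAt ψ (ψ' s) s)
    (hKL : ∀ v : EuclideanSpace ℝ (Fin m), 0 < L v → L v < r₀ →
      1 ≤ ψ' (L v) * ‖gradient L v‖)
    (σF : ℝ) (hσF : 0 < σF)
    (σ₀ : ℝ) (hσ₀ : σ₀ = sigmaMin (fderiv ℝ g θ₀)) (hσ₀pos : 0 < σ₀)
    (R : ℝ) (hRpos : 0 < R)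
    (hinj : ∀ q ∈ Metric.closedBall θ₀ R,
      gradient L (F (g q)) ∈ LinearMap.range (fderiv ℝ F (g q) : EuclideanSpace ℝ (Fin n) →ₗ[ℝ] EuclideanSpace ℝ (Fin m)) ∧
      ∀ z ∈ LinearMap.range (fderiv ℝ F (g q) : EuclideanSpace ℝ (Fin n) →ₗ[ℝ] EuclideanSpace ℝ (Fin m)),
        σF * ‖z‖ ≤ ‖ContinuousLinearMap.adjoint (fderiv ℝ F (g q)) z‖)
    (hLip : ∀ a ∈ Metric.closedBall θ₀ R, ∀ b ∈ Metric.closedBall θ₀ R,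
      ‖fderiv ℝ g a - fderiv ℝ g b‖ ≤ σ₀ / (2 * R) * ‖a - b‖)
    (hRR : 2 / (σF * σ₀) * ψ (L (F (g θ₀))) < R) :
    (∃ θ : ℝ → EuclideanSpace ℝ (Fin p), θ 0 = θ₀ ∧
      (∀ t ≥ (0:ℝ), HasDerivAt θ (-gradient (fun q => L (F (g q))) (θ t)) t) ∧
      ContinuousOn (fun t => -gradient (fun q => L (F (g q))) (θ t)) (Set.Ici 0)) ∧
    ∀ θ₁ θ₂ : ℝ → EuclideanSpace ℝ (Fin p),
      (θ₁ 0 = θ₀ ∧ (∀ t ≥ (0:ℝ), HasDerivAt θ₁ (-gradient (fun q => L (F (g q))) (θ₁ t)) t) ∧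
        ContinuousOn (fun t => -gradient (fun q => L (F (g q))) (θ₁ t)) (Set.Ici 0)) →
      (θ₂ 0 = θ₀ ∧ (∀ t ≥ (0:ℝ), HasDerivAt θ₂ (-gradient (fun q => L (F (g q))) (θ₂ t)) t) ∧
        ContinuousOn (fun t => -gradient (fun q => L (F (g q))) (θ₂ t)) (Set.Ici 0)) →
      ∀ t ≥ (0:ℝ), θ₁ t = θ₂ t := by
  have hLd := hL.differentiable one_ne_zero
  have hFd := hF.differentiable one_ne_zero
  have hgd := hg.differentiable one_ne_zero
  have hgrad : LocallyLipschitz (gradient fun q ↦ L (F (g q))) :=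
    .gradient_comp (φ := fun x ↦ L (F x)) (hLd.comp hFd) hg
      (.gradient_comp hLd hF (locallyLipschitz_of_forall_isBounded hLgrad)
        (locallyLipschitz_of_forall_isBounded hJF)) (locallyLipschitz_of_forall_isBounded hJg)
  have hKLf (q) (hq : q ∈ closedBall θ₀ R) (h₀ : 0 < L (F (g q))) (h₁ : L (F (g q)) < r₀) :
      1 ≤ 2 / (σF * σ₀) * ψ' (L (F (g q))) * ‖gradient (fun q ↦ L (F (g q))) q‖ :=
    one_le_mul_norm_gradient_comp_comp (hLd _) (hFd _) (hgd q) hσ₀pos hσF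
      (half_mul_norm_le_norm_adjoint_apply hσ₀pos.le hRpos (hσ₀ ▸ sigmaMin_mul_norm_le _) hLip hq)
      ((hinj q hq).2 _ (hinj q hq).1) (hKL _ h₀ h₁)
  have hψ₀ (s) (hs : s ∈ Ico 0 r₀) : 0 ≤ 2 / (σF * σ₀) * ψ s := by
    have := hψmono.monotoneOn ⟨le_rfl, (hLnonneg _).trans_lt hr₀⟩ hs hs.1
    rw [hψ0] at this
    positivity
  obtain ⟨θ, hθ₀, hθ⟩ := exists_gradient_flow_of_kl (hLd.comp (hFd.comp hgd)) (fun _ ↦ hLnonneg _)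
    hgrad hr₀ hψ₀ (continuousOn_const.mul hψcont) (fun s hs ↦ (hψd s hs).const_mul _) hKLf hRR
  refine ⟨⟨θ, hθ₀, hθ, fun t ht ↦ ?_⟩, fun θ₁ θ₂ h₁ h₂ ↦ ?_⟩
  · exact (hgrad.continuous.continuousAt.comp (hθ t ht).continuousAt).neg.continuousWithinAt
  · exact ODE_solution_unique_Ici_of_locallyLipschitz (locallyLipschitz_neg_iff.2 hgrad)
      h₁.2.1 h₂.2.1 (h₁.1.trans h₂.1.symm)

theorem stmt11
    {n m p : ℕ} (hn : 0 < n) (hm : 0 < m) (hp : 0 < p)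
    (L : EuclideanSpace ℝ (Fin m) → ℝ)
    (F : EuclideanSpace ℝ (Fin n) → EuclideanSpace ℝ (Fin m))
    (g : EuclideanSpace ℝ (Fin p) → EuclideanSpace ℝ (Fin n))
    (hL : ContDiff ℝ 1 L)
    (hLnonneg : ∀ v, 0 ≤ L v) (hLmin : ∃ v, L v = 0)
    (hLgrad : ∀ s : Set (EuclideanSpace ℝ (Fin m)), Bornology.IsBounded s →
      ∃ K : ℝ≥0, LipschitzOnWith K (fun v => gradient L v) s)
    (hF : ContDiff ℝ 1 F)
    (hJF : ∀ s : Set (EuclideanSpace ℝ (Fin n)), Bornology.IsBounded s →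
      ∃ K : ℝ≥0, LipschitzOnWith K (fun x => fderiv ℝ F x) s)
    (hg : ContDiff ℝ 1 g)
    (hJg : ∀ s : Set (EuclideanSpace ℝ (Fin p)), Bornology.IsBounded s →
      ∃ K : ℝ≥0, LipschitzOnWith K (fun q => fderiv ℝ g q) s)
    (θ₀ : EuclideanSpace ℝ (Fin p))
    (r₀ : ℝ) (hr₀ : L (F (g θ₀)) < r₀)
    (ψ ψ' : ℝ → ℝ) (hψ0 : ψ 0 = 0)
    (hψcont : ContinuousOn ψ (Set.Ico 0 r₀))
    (hψmono : StrictMonoOn ψ (Set.Ico 0 r₀))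
    (hψd : ∀ s ∈ Set.Ioo (0:ℝ) r₀, HasDerivAt ψ (ψ' s) s)
    (hKL : ∀ v : EuclideanSpace ℝ (Fin m), 0 < L v → L v < r₀ →
      1 ≤ ψ' (L v) * ‖gradient L v‖)
    (σF : ℝ) (hσF : 0 < σF)
    (σ₀ : ℝ) (hσ₀ : σ₀ = sigmaMin (fderiv ℝ g θ₀)) (hσ₀pos : 0 < σ₀)
    (R : ℝ) (hRpos : 0 < R)
    (hinj : ∀ q ∈ Metric.closedBall θ₀ R,
      gradient L (F (g q)) ∈ LinearMap.range (fderiv ℝ F (g q) : EuclideanSpace ℝ (Fin n) →ₗ[ℝ] EuclideanSpace ℝ (Fin m)) ∧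
      ∀ z ∈ LinearMap.range (fderiv ℝ F (g q) : EuclideanSpace ℝ (Fin n) →ₗ[ℝ] EuclideanSpace ℝ (Fin m)),
        σF * ‖z‖ ≤ ‖ContinuousLinearMap.adjoint (fderiv ℝ F (g q)) z‖)
    (hLip : ∀ a ∈ Metric.closedBall θ₀ R, ∀ b ∈ Metric.closedBall θ₀ R,
      ‖fderiv ℝ g a - fderiv ℝ g b‖ ≤ σ₀ / (2 * R) * ‖a - b‖)
    (hRR : 2 / (σF * σ₀) * ψ (L (F (g θ₀))) < R) :
    (∃ θ : ℝ → EuclideanSpace ℝ (Fin p), θ 0 = θ₀ ∧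
      (∀ t ≥ (0:ℝ), HasDerivAt θ (-gradient (fun q => L (F (g q))) (θ t)) t) ∧
      ContinuousOn (fun t => -gradient (fun q => L (F (g q))) (θ t)) (Set.Ici 0)) ∧
    ∀ θ₁ θ₂ : ℝ → EuclideanSpace ℝ (Fin p),
      (θ₁ 0 = θ₀ ∧ (∀ t ≥ (0:ℝ), HasDerivAt θ₁ (-gradient (fun q => L (F (g q))) (θ₁ t)) t) ∧
        ContinuousOn (fun t => -gradient (fun q => L (F (g q))) (θ₁ t)) (Set.Ici 0)) →
      (θ₂ 0 = θ₀ ∧ (∀ t ≥ (0:ℝ), HasDerivAt θ₂ (-gradient (fun q => L (F (g q))) (θ₂ t)) t) ∧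
        ContinuousOn (fun t => -gradient (fun q => L (F (g q))) (θ₂ t)) (Set.Ici 0)) →
      ∀ t ≥ (0:ℝ), θ₁ t = θ₂ t :=
  stmt11_general L F g hL hLnonneg hLgrad hF hJF hg hJg θ₀ r₀ hr₀ ψ ψ' hψ0 hψcont hψmono hψd hKL σF
    hσF σ₀ hσ₀ hσ₀pos R hRpos hinj hLip hRR
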